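/- Let A be an associative algebra, P, L ∈ A with P² = P, and suppose the relation PLPL - LPLP + a(LP - PL) = 0 holds for some scalar a. Define L₊ = PLP. Then L₊² = LL₊ - aLP + aL₊ (all products in A). -/
import Mathlib


theorem stmt8 {k A : Type*} [Field k] [Ring A] [Algebra k A] (a : k) (P L : A)
    (hP : P * P = P)
    (hrel : P * L * P * L - L * P * L * P + a • (L * P - P * L) = 0) :
    (P * L * P) * (P * L * P)
      = L * (P * L * P) - a • (L * P) + a • (P * L * P) := by
  have h : (P * L * P * L - L * P * L * P + a • (L * P - P * L)) * P = 0 := by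
    rw [hrel, zero_mul]
  have h2 : P * L * P * L * P - L * P * L * P + a • (L * P - P * L * P) = 0 := by
    have := h
    simp only [sub_mul, add_mul, smul_mul_assoc, mul_assoc] at this ⊢
    rw [hP] at this
    convert this using 3
  have key : P * L * P * L * P = L * P * L * P - a • (L * P) + a • (P * L * P) := by
    have := h2
    rw [smul_sub] at this
    linear_combination (norm := noncomm_ring) this
  calc (P * L * P) * (P * L * P) = P * L * (P * P) * L * P := by noncomm_ring
    _ = P * L * P * L * P := by rw [hP]
    _ = L * (P * L * P) - a • (L * P) + a • (P * L * P) := by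
        rw [key]; noncomm_ring
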